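/- arXiv:1402.2495 — 2 statements merged into one kernel-verified Lean document; each statement's English description precedes it below -/
import Mathlib

section
/- Let F : ℝ^m → ℝ^m be locally Lipschitz and suppose F(u₁,...,u_m)·(u₁,0,...,0) > 0 whenever u₁ > L, for some constant L ≥ 0. If u ∈ C²(ℝⁿ; ℝ^m) is a bounded entire solution of Δu = F(u) on ℝⁿ, then the first component satisfies u₁(x) ≤ L for all x ∈ ℝⁿ. -/
/-!
Suppose `u₁(x) > L` somewhere and pick `L < a < u₁(x)`. On the compact set of values
`{w : ‖w‖ ≤ sup ‖u‖, w₁ ≥ a}` the continuous function `F₁` is positive, hence at least some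
`δ > 0`. Since `u₁` is bounded above, for small `ε > 0` the function `u₁ - ε‖·‖²` attains a global
maximum at a point `x₀` with `u₁(x₀) > a` (a weak Omori–Yau maximum principle), and there
`Δu₁(x₀) ≤ 2nε < δ`. But `Δu₁(x₀) = F₁(u(x₀)) ≥ δ`.
-/

/-- Componentwise Laplacian of a map `ℝⁿ → ℝᵐ`. -/
noncomputable def vectorLaplacian {n m : ℕ}
    (u : EuclideanSpace ℝ (Fin n) → EuclideanSpace ℝ (Fin m))
    (x : EuclideanSpace ℝ (Fin n)) : EuclideanSpace ℝ (Fin m) :=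
  ∑ i : Fin n, fderiv ℝ (fun y => fderiv ℝ u y (EuclideanSpace.single i 1)) x
    (EuclideanSpace.single i 1)

open Filter Topology Laplacian InnerProductSpace

theorem IsLocalMax.deriv_deriv_nonpos {f : ℝ → ℝ} {a : ℝ} (h : IsLocalMax f a)
    (hc : ContinuousAt f a) : deriv (deriv f) a ≤ 0 := by
  by_contra! hpos
  have hmin : IsLocalMin f a := isLocalMin_of_deriv_deriv_pos hpos h.deriv_eq_zero hc
  have hconst : f =ᶠ[𝓝 a] fun _ => f a := (hmin.and h).mono fun _ hx => le_antisymm hx.2 hx.1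
  have hderiv : deriv f =ᶠ[𝓝 a] fun _ => 0 :=
    hconst.eventuallyEq_nhds.mono fun _ hx => by rw [hx.deriv_eq, deriv_const]
  exact hpos.ne' (by rw [hderiv.deriv_eq, deriv_const])

section Penalization

variable {E : Type*} [NormedAddCommGroup E] [InnerProductSpace ℝ E]

theorem fderiv_fderiv_apply_le_of_isLocalMax_sub_sq {v : E → ℝ} (hv : ContDiff ℝ 2 v) {ε : ℝ}
    {x₀ : E} (hmax : IsLocalMax (fun x => v x - ε * ‖x‖ ^ 2) x₀) (w : E) :
    fderiv ℝ (fderiv ℝ v) x₀ w w ≤ 2 * ε * ‖w‖ ^ 2 := by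
  set ψ : ℝ → ℝ := fun t => v (x₀ + t • w) - ε * ‖x₀ + t • w‖ ^ 2
  have hline : ∀ t : ℝ, HasDerivAt (fun s : ℝ => x₀ + s • w) w t := fun t => by
    simpa using ((hasDerivAt_id t).smul_const w).const_add x₀
  have hv1 : ContDiff ℝ 1 (fderiv ℝ v) := hv.fderiv_right (by norm_num)
  have hψ : ∀ t, HasDerivAt ψ
      (fderiv ℝ v (x₀ + t • w) w - ε * (2 * inner ℝ (x₀ + t • w) w)) t := fun t =>
    (((hv.differentiable (by norm_num)) _).hasFDerivAt.comp_hasDerivAt t (hline t)).sub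
      ((hline t).norm_sq.const_mul ε)
  have hψmax : IsLocalMax ψ 0 := by
    rw [← show x₀ + (0 : ℝ) • w = x₀ by simp] at hmax
    exact hmax.comp_continuous (g := fun t : ℝ => x₀ + t • w) (hline 0).continuousAt
  have hψ' : HasDerivAt (deriv ψ) (fderiv ℝ (fderiv ℝ v) x₀ w w - ε * (2 * ‖w‖ ^ 2)) 0 := by
    rw [funext fun t => (hψ t).deriv]
    have h1 := (((hv1.differentiable one_ne_zero) _).hasFDerivAt.comp_hasDerivAt 0
      (hline 0)).clm_apply (hasDerivAt_const (0 : ℝ) w)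
    have h2 := (((hline 0).inner ℝ (hasDerivAt_const (0 : ℝ) w)).const_mul 2).const_mul ε
    refine (h1.sub h2).congr_deriv ?_
    simp
  have := hψmax.deriv_deriv_nonpos (hψ 0).continuousAt
  rw [hψ'.deriv] at this
  linarith

theorem laplacian_le_of_isLocalMax_sub_sq [FiniteDimensional ℝ E] {v : E → ℝ}
    (hv : ContDiff ℝ 2 v) {ε : ℝ} {x₀ : E}
    (hmax : IsLocalMax (fun x => v x - ε * ‖x‖ ^ 2) x₀) :
    Δ v x₀ ≤ 2 * ε * Module.finrank ℝ E := by
  rw [laplacian_eq_iteratedFDeriv_stdOrthonormalBasis]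
  calc ∑ i, iteratedFDeriv ℝ 2 v x₀ ![stdOrthonormalBasis ℝ E i, stdOrthonormalBasis ℝ E i]
      ≤ ∑ _i : Fin (Module.finrank ℝ E), 2 * ε := by
        refine Finset.sum_le_sum fun i _ => ?_
        simpa [iteratedFDeriv_two_apply] using
          fderiv_fderiv_apply_le_of_isLocalMax_sub_sq hv hmax (stdOrthonormalBasis ℝ E i)
    _ = 2 * ε * Module.finrank ℝ E := by simp [mul_comm]

theorem exists_forall_sub_sq_le {F : Type*} [NormedAddCommGroup F] [ProperSpace F] {v : F → ℝ}
    (hv : Continuous v) (hbdd : BddAbove (Set.range v)) {ε : ℝ} (hε : 0 < ε) :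
    ∃ x₀, ∀ x, v x - ε * ‖x‖ ^ 2 ≤ v x₀ - ε * ‖x₀‖ ^ 2 := by
  obtain ⟨C, hC⟩ := hbdd
  refine Continuous.exists_forall_ge' (f := fun x => v x - ε * ‖x‖ ^ 2) (by fun_prop) 0 ?_
  have hgrow : Tendsto (fun x : F => ε * ‖x‖ ^ 2) (cocompact F) atTop :=
    ((tendsto_pow_atTop two_ne_zero).comp tendsto_norm_cocompact_atTop).const_mul_atTop hε
  filter_upwards [hgrow.eventually_ge_atTop (C - v 0)] with x hx
  have := hC (Set.mem_range_self x)
  rw [norm_zero]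
  linarith

theorem exists_lt_laplacian_le [FiniteDimensional ℝ E] {v : E → ℝ} (hv : ContDiff ℝ 2 v)
    (hbdd : BddAbove (Set.range v)) {a : ℝ} (ha : ∃ y, a < v y) {η : ℝ} (hη : 0 < η) :
    ∃ x, a < v x ∧ Δ v x ≤ η := by
  obtain ⟨y, hy⟩ := ha
  have hsmall : ∀ᶠ ε in 𝓝[>] (0 : ℝ),
      0 < ε ∧ ε * ‖y‖ ^ 2 < v y - a ∧ 2 * ε * Module.finrank ℝ E < η := by
    refine eventually_mem_nhdsWithin.and (nhdsWithin_le_nhds ?_)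
    refine ((continuousAt_id.mul continuousAt_const).eventually_lt continuousAt_const ?_).and
      ((continuousAt_const.mul continuousAt_id |>.mul continuousAt_const).eventually_lt
        continuousAt_const ?_) <;> simpa
  obtain ⟨ε, hε, hεy, hεη⟩ := hsmall.exists
  obtain ⟨x₀, hx₀⟩ := exists_forall_sub_sq_le hv.continuous hbdd hε
  refine ⟨x₀, ?_, ?_⟩
  · have := hx₀ y
    nlinarith [sq_nonneg ‖x₀‖]
  · exact (laplacian_le_of_isLocalMax_sub_sq hv (Eventually.of_forall hx₀)).trans hεη.le

end Penalization

theorem vectorLaplacian_eq_laplacian {n m : ℕ}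
    {u : EuclideanSpace ℝ (Fin n) → EuclideanSpace ℝ (Fin m)} (hu : ContDiff ℝ 2 u) :
    vectorLaplacian u = Δ u := by
  ext1 x
  have hdu : Differentiable ℝ (fderiv ℝ u) :=
    (hu.fderiv_right (m := 1) le_rfl).differentiable one_ne_zero
  rw [laplacian_eq_iteratedFDeriv_orthonormalBasis u (EuclideanSpace.basisFun (Fin n) ℝ)]
  simp [vectorLaplacian, iteratedFDeriv_two_apply,
    fderiv_clm_apply (hdu x) (differentiableAt_const _)]

theorem component_bound_lemma {n m : ℕ} (hm : 0 < m)
    (F : EuclideanSpace ℝ (Fin m) → EuclideanSpace ℝ (Fin m))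
    (hF : LocallyLipschitz F) (L : ℝ) (hL : 0 ≤ L)
    (hsign : ∀ u : EuclideanSpace ℝ (Fin m), u ⟨0, hm⟩ > L → F u ⟨0, hm⟩ * u ⟨0, hm⟩ > 0)
    (u : EuclideanSpace ℝ (Fin n) → EuclideanSpace ℝ (Fin m))
    (hu : ContDiff ℝ 2 u) (hbdd : ∃ C : ℝ, ∀ x, ‖u x‖ ≤ C)
    (hsol : ∀ x, vectorLaplacian u x = F (u x)) :
    ∀ x, u x ⟨0, hm⟩ ≤ L := by
  intro x
  by_contra! hx
  set j : Fin m := ⟨0, hm⟩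
  set v : EuclideanSpace ℝ (Fin n) → ℝ := EuclideanSpace.proj j ∘ u
  obtain ⟨C, hC⟩ := hbdd
  obtain ⟨a, hLa, hax⟩ := exists_between hx
  set K := Metric.closedBall (0 : EuclideanSpace ℝ (Fin m)) C ∩ {w | a ≤ w j}
  have hK : IsCompact K := (isCompact_closedBall _ _).inter_right
    (isClosed_le continuous_const (EuclideanSpace.proj j).continuous)
  obtain ⟨δ, hδ, hFδ⟩ := hK.exists_forall_le' (f := fun w => F w j)
    ((EuclideanSpace.proj j).continuous.comp hF.continuous).continuousOn fun w hw =>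
      have hLw : L < w j := hLa.trans_le hw.2
      pos_of_mul_pos_left (hsign w hLw) (hL.trans hLw.le)
  have hvbdd : BddAbove (Set.range v) := ⟨C, Set.forall_mem_range.2 fun y =>
    (le_abs_self _).trans ((PiLp.norm_apply_le (u y) j).trans (hC y))⟩
  obtain ⟨x₀, hax₀, hΔ⟩ :=
    exists_lt_laplacian_le ((EuclideanSpace.proj j).contDiff.comp hu) hvbdd ⟨x, hax⟩ (half_pos hδ)
  have hΔv : Δ v x₀ = F (u x₀) j := by
    rw [hu.contDiffAt.laplacian_CLM_comp_left, Function.comp_apply,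
      ← vectorLaplacian_eq_laplacian hu, hsol]
    rfl
  have := hFδ (u x₀) ⟨mem_closedBall_zero_iff.2 (hC x₀), hax₀.le⟩
  linarith
end

section
/- Let a = (0, a₂), b = (0, −a₂), c = (c₁, c₂) with a₂ > 0 and c₁ < 0, and let W(u) = |u−a|²|u−b|²|u−c|². Then for every u = (u₁, u₂) ∈ ℝ² with u₁ > 0, the first component of ∇W(u) is strictly positive. -/
/-!
By the product rule, `∇W(u) = 2 (|u-b|²|u-c|² (u-a) + |u-a|²|u-c|² (u-b) + |u-a|²|u-b|² (u-c))`,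
a combination of `u - a`, `u - b`, `u - c` with nonnegative coefficients. Any linear functional
that is positive on all three vectors (which forces `u ∉ {a, b, c}`, so the coefficients are
positive) is therefore positive on `∇W(u)`. The first coordinate is such a functional when
`u₁ > 0`, since the first coordinates of `u - a`, `u - b`, `u - c` are `u₁`, `u₁`, `u₁ - c₁`.
-/

section

variable {F : Type*} [NormedAddCommGroup F] [InnerProductSpace ℝ F] [CompleteSpace F]

theorem HasGradientAt.mul {f g : F → ℝ} {f' g' x : F} (hf : HasGradientAt f f' x)
    (hg : HasGradientAt g g' x) :
    HasGradientAt (fun y => f y * g y) (f x • g' + g x • f') x := by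
  rw [hasGradientAt_iff_hasFDerivAt] at *
  have := hf.mul hg
  rwa [← map_smul, ← map_smul, ← map_add] at this

theorem hasGradientAt_norm_sub_sq (a x : F) :
    HasGradientAt (fun y => ‖y - a‖ ^ 2) ((2 : ℝ) • (x - a)) x := by
  rw [hasGradientAt_iff_hasFDerivAt]
  refine ((hasFDerivAt_id x).sub_const a).norm_sq.congr_fderiv ?_
  ext y
  simp

theorem hasGradientAt_triple_well (a b c x : F) :
    HasGradientAt (fun y => ‖y - a‖ ^ 2 * ‖y - b‖ ^ 2 * ‖y - c‖ ^ 2)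
      ((2 : ℝ) • ((‖x - b‖ ^ 2 * ‖x - c‖ ^ 2) • (x - a) + (‖x - a‖ ^ 2 * ‖x - c‖ ^ 2) • (x - b)
        + (‖x - a‖ ^ 2 * ‖x - b‖ ^ 2) • (x - c))) x := by
  convert ((hasGradientAt_norm_sub_sq a x).mul (hasGradientAt_norm_sub_sq b x)).mul
    (hasGradientAt_norm_sub_sq c x) using 1
  simp only [smul_add, smul_smul]
  module

theorem pos_apply_gradient_triple_well (ℓ : F →L[ℝ] ℝ) {a b c x : F}
    (ha : 0 < ℓ (x - a)) (hb : 0 < ℓ (x - b)) (hc : 0 < ℓ (x - c)) :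
    0 < ℓ (gradient (fun y => ‖y - a‖ ^ 2 * ‖y - b‖ ^ 2 * ‖y - c‖ ^ 2) x) := by
  have norm_sq_pos : ∀ p, 0 < ℓ (x - p) → 0 < ‖x - p‖ ^ 2 := fun p hp => by
    have : x - p ≠ 0 := fun h => by simp [h] at hp
    positivity
  rw [(hasGradientAt_triple_well a b c x).gradient]
  simp only [map_smul, map_add, smul_eq_mul]
  have hA := norm_sq_pos a ha
  have hB := norm_sq_pos b hb
  have hC := norm_sq_pos c hc
  positivity

end

theorem triple_well_gradient_first_component_pos_general
    (c₁ : ℝ) (hc₁ : c₁ < 0)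
    (a b c : EuclideanSpace ℝ (Fin 2))
    (ha : a 0 = 0) (hb : b 0 = 0)
    (hc : c 0 = c₁)
    (W : EuclideanSpace ℝ (Fin 2) → ℝ)
    (hW : W = fun v => ‖v - a‖ ^ 2 * ‖v - b‖ ^ 2 * ‖v - c‖ ^ 2)
    (u : EuclideanSpace ℝ (Fin 2)) (hu : u 0 > 0) :
    0 < gradient W u 0 := by
  subst hW
  refine pos_apply_gradient_triple_well (EuclideanSpace.proj (0 : Fin 2)) ?_ ?_ ?_ <;>
    simp only [EuclideanSpace.coe_proj, PiLp.sub_apply, ha, hb, hc] <;> linarith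

theorem triple_well_gradient_first_component_pos
    (a₂ c₁ c₂ : ℝ) (ha₂ : 0 < a₂) (hc₁ : c₁ < 0)
    (a b c : EuclideanSpace ℝ (Fin 2))
    (ha : a 0 = 0) (ha' : a 1 = a₂) (hb : b 0 = 0) (hb' : b 1 = -a₂)
    (hc : c 0 = c₁) (hc' : c 1 = c₂)
    (W : EuclideanSpace ℝ (Fin 2) → ℝ)
    (hW : W = fun v => ‖v - a‖ ^ 2 * ‖v - b‖ ^ 2 * ‖v - c‖ ^ 2)
    (u : EuclideanSpace ℝ (Fin 2)) (hu : u 0 > 0) :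
    0 < gradient W u 0 :=
  triple_well_gradient_first_component_pos_general c₁ hc₁ a b c ha hb hc W hW u hu
end
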